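/- Every continuous multilinear function f : V₁ × ... × V_k → ℝ on finite-dimensional real inner product spaces attains a maximum on the product of unit spheres S^{n₁-1} × ... × S^{n_k-1} (n_i ≥ 1), and every maximizer (v₁,...,v_k) together with σ = f(v₁,...,v_k) is a singular tuple: ∇_i f(v₁,...,v_k) = σ v_i for all i. -/

import Mathlib

/-!
A continuous function attains its maximum on the compact product of unit spheres. At a
maximizer `v`, the linear functional `u ↦ f(v₁,…,u,…,v_k)` is maximized on the unit sphere
of `V_i` at `v_i`; writing it as `⟪a, ·⟫`, equality in Cauchy–Schwarz forces `a = f(v) v_i`.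
-/

open scoped RealInnerProductSpace
open Metric Set

section InnerProductSpace

variable {E : Type*} [NormedAddCommGroup E] [InnerProductSpace ℝ E]

theorem eq_inner_smul_of_isMaxOn_inner_sphere {a x : E} (hx : ‖x‖ = 1)
    (hmax : IsMaxOn (⟪a, ·⟫) (sphere 0 1) x) : a = ⟪a, x⟫ • x := by
  rcases eq_or_ne a 0 with rfl | ha
  · simp
  have hle : ‖a‖ ≤ ⟪a, x⟫ := by
    have hy : ‖a‖⁻¹ • a ∈ sphere (0 : E) 1 := by
      rw [mem_sphere_zero_iff_norm, norm_smul, norm_inv, norm_norm, inv_mul_cancel₀ (norm_ne_zero_iff.2 ha)]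
    calc ‖a‖ = ⟪a, ‖a‖⁻¹ • a⟫ := by
          rw [real_inner_smul_right, real_inner_self_eq_norm_sq]; field_simp
      _ ≤ ⟪a, x⟫ := hmax hy
  have hinner : ⟪a, x⟫ = ‖a‖ * ‖x‖ := by
    rw [hx, mul_one]
    exact le_antisymm (by simpa [hx] using real_inner_le_norm a x) hle
  have hparallel : a = ‖a‖ • x := by simpa [hx] using inner_eq_norm_mul_iff_real.1 hinner
  rwa [hinner, hx, mul_one]

theorem ContinuousLinearMap.apply_eq_inner_of_isMaxOn_sphere [CompleteSpace E] (φ : E →L[ℝ] ℝ)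
    {x : E} (hx : ‖x‖ = 1) (hmax : IsMaxOn φ (sphere 0 1) x) (u : E) :
    φ u = ⟪φ x • x, u⟫ := by
  set a := (InnerProductSpace.toDual ℝ E).symm φ
  have hφ : ∀ y, φ y = ⟪a, y⟫ := fun y => (InnerProductSpace.toDual_symm_apply).symm
  have ha : a = ⟪a, x⟫ • x :=
    eq_inner_smul_of_isMaxOn_inner_sphere hx fun y hy => by simpa only [hφ] using hmax hy
  rw [hφ, hφ, ← ha]

end InnerProductSpace

section PiSphere

variable {ι : Type*} {E : ι → Type*}

theorem exists_isMaxOn_pi_sphere [∀ i, NormedAddCommGroup (E i)] [∀ i, NormedSpace ℝ (E i)]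
    [∀ i, ProperSpace (E i)] [∀ i, Nontrivial (E i)] {β : Type*} [LinearOrder β]
    [TopologicalSpace β] [ClosedIciTopology β] {g : (∀ i, E i) → β} (hg : Continuous g) :
    ∃ v ∈ univ.pi fun i => sphere (0 : E i) 1, IsMaxOn g (univ.pi fun _ => sphere 0 1) v :=
  (isCompact_univ_pi fun _ => isCompact_sphere 0 1).exists_isMaxOn
    (univ_pi_nonempty_iff.2 fun _ => NormedSpace.sphere_nonempty.2 zero_le_one) hg.continuousOn

theorem ContinuousMultilinearMap.apply_update_eq_inner_of_isMaxOn_pi_sphere [Fintype ι]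
    [DecidableEq ι] [∀ i, NormedAddCommGroup (E i)] [∀ i, InnerProductSpace ℝ (E i)]
    [∀ i, CompleteSpace (E i)] (f : ContinuousMultilinearMap ℝ E ℝ) {v : ∀ i, E i}
    (hv : v ∈ univ.pi fun i => sphere (0 : E i) 1)
    (hmax : IsMaxOn f (univ.pi fun _ => sphere 0 1) v) (i : ι) (u : E i) :
    f (Function.update v i u) = ⟪f v • v i, u⟫ := by
  have hslot : IsMaxOn (f.toContinuousLinearMap v i) (sphere 0 1) (v i) := fun y hy => by
    simpa using hmax ((update_mem_pi_iff_of_mem hv).2 fun _ => hy)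
  simpa using (f.toContinuousLinearMap v i).apply_eq_inner_of_isMaxOn_sphere
    (mem_sphere_zero_iff_norm.1 (hv i (mem_univ i))) hslot u

end PiSphere

/-- Every continuous multilinear function `f : V₁ × ⋯ × V_k → ℝ` on finite-dimensional
real inner product spaces attains a maximum on the product of unit spheres (`n_i ≥ 1`),
and every maximizer `(v₁,…,v_k)` together with `σ = f(v₁,…,v_k)` is a singular tuple:
`∇_i f(v₁,…,v_k) = σ v_i` for all `i`, where `∇_i f(v₁,…,v_k)` is the vector
representing the linear functional `u ↦ f(v₁,…,u,…,v_k)`. -/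
theorem exists_max_singular_tuple {k : ℕ} {n : Fin k → ℕ} (hn : ∀ i, 1 ≤ n i)
    (f : ContinuousMultilinearMap ℝ (fun r : Fin k => EuclideanSpace ℝ (Fin (n r))) ℝ) :
    (∃ v : ∀ r : Fin k, EuclideanSpace ℝ (Fin (n r)), (∀ i, ‖v i‖ = 1) ∧
      ∀ w : ∀ r : Fin k, EuclideanSpace ℝ (Fin (n r)),
        (∀ i, ‖w i‖ = 1) → f w ≤ f v) ∧
    (∀ v : ∀ r : Fin k, EuclideanSpace ℝ (Fin (n r)), (∀ i, ‖v i‖ = 1) →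
      (∀ w : ∀ r : Fin k, EuclideanSpace ℝ (Fin (n r)), (∀ i, ‖w i‖ = 1) → f w ≤ f v) →
      ∀ i, ∀ u : EuclideanSpace ℝ (Fin (n i)),
        f (Function.update v i u) = ⟪f v • v i, u⟫) := by
  have : ∀ i, Nontrivial (EuclideanSpace ℝ (Fin (n i))) := fun i =>
    haveI : NeZero (n i) := ⟨Nat.one_le_iff_ne_zero.1 (hn i)⟩
    inferInstance
  have hS : ∀ v : ∀ r, EuclideanSpace ℝ (Fin (n r)),
      v ∈ (univ.pi fun _ => sphere 0 1) ↔ ∀ i, ‖v i‖ = 1 := by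
    simp
  refine ⟨?_, fun v hv hmax => f.apply_update_eq_inner_of_isMaxOn_pi_sphere ((hS v).2 hv)
    fun w hw => hmax w ((hS w).1 hw)⟩
  obtain ⟨v, hv, hmax⟩ := exists_isMaxOn_pi_sphere f.cont
  exact ⟨v, (hS v).1 hv, fun w hw => hmax ((hS w).2 hw)⟩
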